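/- arXiv:2406.15127 — 3 statements merged into one kernel-verified Lean document; each statement's English description precedes it below -/
import Mathlib

section
/- Under the same hypotheses, the combination α Ω^{-1} n∂ω equals -(1/2)√(H³(1 - α²m²/E²)/α) · ((1 + 3α²) - 2α⁴m²/E²); in particular, on the oriented inner boundary (opposite normal) it equals +(1/2)√(H³(1-α²m²/E²)/α)·((1+3α²) - 2α⁴m²/E²) per unit area. -/
theorem boundary_term_14c (α H m E nα ω Ω nω : ℝ)
    (hα0 : 0 < α) (hα1 : α < 1) (hH : 0 < H) (hnonext : m ^ 2 * α ^ 2 / E ^ 2 < 1)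
    (hnα : nα = α * H * (1 - α ^ 2 * m ^ 2 / E ^ 2))
    (hω : ω = Real.sqrt (4 * nα / (1 + α ^ 2) ^ 2))
    (hΩ : Ω = 4 * α ^ 2 / (1 + α ^ 2) ^ 2)
    (hnω : nω = ω⁻¹ * (-8 * α * nα ^ 2 / (1 + α ^ 2) ^ 3 - 4 * H * nα / (1 + α ^ 2) ^ 2)) :
    α * Ω⁻¹ * nω =
      -(1 / 2) * Real.sqrt (H ^ 3 * (1 - α ^ 2 * m ^ 2 / E ^ 2) / α) *
        ((1 + 3 * α ^ 2) - 2 * α ^ 4 * m ^ 2 / E ^ 2) ∧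
    -(α * Ω⁻¹ * nω) =
      (1 / 2) * Real.sqrt (H ^ 3 * (1 - α ^ 2 * m ^ 2 / E ^ 2) / α) *
        ((1 + 3 * α ^ 2) - 2 * α ^ 4 * m ^ 2 / E ^ 2) := by
  obtain ⟨k, hk, hkpos⟩ : ∃ k : ℝ, k = 1 - α ^ 2 * m ^ 2 / E ^ 2 ∧ 0 < k := by
    refine ⟨_, rfl, ?_⟩
    have h : α ^ 2 * m ^ 2 / E ^ 2 = m ^ 2 * α ^ 2 / E ^ 2 := by ring
    rw [h]; linarith
  rw [← hk] at hnα ⊢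
  have h1α : (0:ℝ) < 1 + α ^ 2 := by positivity
  set s : ℝ := Real.sqrt (α * H * k) with hs
  have hspos : 0 < s := Real.sqrt_pos.mpr (by positivity)
  have hs2 : s ^ 2 = α * H * k := Real.sq_sqrt (by positivity)
  have hsne : s ≠ 0 := ne_of_gt hspos
  have hαne : α ≠ 0 := ne_of_gt hα0
  have h1ne : (1 + α ^ 2) ≠ 0 := ne_of_gt h1α
  have hω' : ω = 2 * s / (1 + α ^ 2) := by
    rw [hω, hnα]
    rw [show 4 * (α * H * k) / (1 + α ^ 2) ^ 2 = (2 * s / (1 + α ^ 2)) ^ 2 by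
      field_simp; linear_combination -4 * hs2]
    exact Real.sqrt_sq (by positivity)
  have hR : Real.sqrt (H ^ 3 * k / α) = H * s / α := by
    rw [show H ^ 3 * k / α = (H * s / α) ^ 2 by
      field_simp; linear_combination (-1) * hs2]
    exact Real.sqrt_sq (by positivity)
  have hsub : (1 + 3 * α ^ 2) - 2 * α ^ 4 * m ^ 2 / E ^ 2 =
      (1 + α ^ 2) + 2 * α ^ 2 * k := by rw [hk]; ring
  have key : α * Ω⁻¹ * nω = -(1 / 2) * (H * s / α) * ((1 + α ^ 2) + 2 * α ^ 2 * k) := by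
    rw [hnω, hω', hΩ, hnα]
    field_simp
    linear_combination (4 * (1 + α ^ 2 + 2 * α ^ 2 * k)) * hs2
  rw [hR, hsub]
  exact ⟨key, by linarith [key]⟩
end

section
/- Let M > 0, A > 0, α ∈ (0,1), H > 0, x := α²m²/E² ∈ [0,1), and suppose 2π = (3/2 - x)H²A, H = (α/M)(1-x)/(3-2x), and 4π√M ≤ A·√(α³H³(1-x))·(3 - 2x). Then 3α² - 1 - 2α²x ≥ 0. -/
open Real

theorem left_stokes_inequality (M A α H x : ℝ)
    (hM : M > 0) (hA : A > 0) (hα0 : 0 < α) (hα1 : α < 1) (hH : 0 < H)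
    (hx0 : 0 ≤ x) (hx1 : x < 1)
    (hGB : 2 * π = (3 / 2 - x) * H ^ 2 * A)
    (hHval : H = (α / M) * ((1 - x) / (3 - 2 * x)))
    (hineq : 4 * π * Real.sqrt M ≤ A * Real.sqrt (α ^ 3 * H ^ 3 * (1 - x)) * (3 - 2 * x)) :
    3 * α ^ 2 - 1 - 2 * α ^ 2 * x ≥ 0 := by
  have h3 : (0:ℝ) < 3 - 2 * x := by linarith
  have h1x : (0:ℝ) < 1 - x := by linarith
  have hS : 0 ≤ α ^ 3 * H ^ 3 * (1 - x) := by positivity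
  have hL : 0 ≤ 4 * π * Real.sqrt M := by positivity
  have hsq : (4 * π * Real.sqrt M) ^ 2 ≤
      (A * Real.sqrt (α ^ 3 * H ^ 3 * (1 - x)) * (3 - 2 * x)) ^ 2 :=
    pow_le_pow_left₀ hL hineq 2
  have e1 : (4 * π * Real.sqrt M) ^ 2 = 16 * π ^ 2 * M := by
    rw [mul_pow, sq_sqrt hM.le]; ring
  have e2 : (A * Real.sqrt (α ^ 3 * H ^ 3 * (1 - x)) * (3 - 2 * x)) ^ 2
      = A ^ 2 * (α ^ 3 * H ^ 3 * (1 - x)) * (3 - 2 * x) ^ 2 := by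
    rw [mul_pow, mul_pow, sq_sqrt hS]
  rw [e1, e2] at hsq
  have hpi : 16 * π ^ 2 = (3 - 2 * x) ^ 2 * H ^ 4 * A ^ 2 := by
    linear_combination (4 * (2 * π + (3 / 2 - x) * H ^ 2 * A)) * hGB
  rw [hpi] at hsq
  have hMH : M * H ≤ α ^ 3 * (1 - x) := by
    have hA2 : (0:ℝ) < A ^ 2 := by positivity
    have h32 : (0:ℝ) < (3 - 2 * x) ^ 2 := by positivity
    have hH3 : (0:ℝ) < H ^ 3 := by positivity
    nlinarith [mul_pos (mul_pos hA2 h32) hH3]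
  rw [hHval] at hMH
  have hM' : M ≠ 0 := ne_of_gt hM
  rw [show M * (α / M * ((1 - x) / (3 - 2 * x))) = α * (1 - x) / (3 - 2 * x) from by
    field_simp] at hMH
  rw [div_le_iff₀ h3] at hMH
  -- α(1-x) ≤ α³(1-x)(3-2x)
  have hα1x : (0:ℝ) < α * (1 - x) := mul_pos hα0 h1x
  nlinarith [hα1x, hMH, sq_nonneg α]
end

section
/- Let M > 0 and suppose α ∈ (0,1) and x = α²m²/E² ∈ [0,1) satisfy 3α² - 1 - 2α²x = 0. Then α² = 1/(3 - 2x), and with H = (α/M)(1-x)/(3-2x) and A determined by 2π = (3/2-x)H²A, the area radius r = √(A/(4π)) satisfies α² = 1 - 2M/r and x = (r-3M)/(r-2M). -/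
open Real

theorem equality_case_schwarzschild (M α x H A : ℝ)
    (hM : M > 0) (hα0 : 0 < α) (hα1 : α < 1)
    (hx0 : 0 ≤ x) (hx1 : x < 1)
    (heq : 3 * α ^ 2 - 1 - 2 * α ^ 2 * x = 0)
    (hH : H = (α / M) * ((1 - x) / (3 - 2 * x)))
    (hA : 2 * π = (3 / 2 - x) * H ^ 2 * A) :
    α ^ 2 = 1 / (3 - 2 * x) ∧
    (let r := Real.sqrt (A / (4 * π));
      α ^ 2 = 1 - 2 * M / r ∧ x = (r - 3 * M) / (r - 2 * M)) := by
  have h32 : (3 : ℝ) - 2 * x > 0 := by linarith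
  have h1x : (1 : ℝ) - x > 0 := by linarith
  have hπ := Real.pi_pos
  have hα2 : α ^ 2 = 1 / (3 - 2 * x) := by
    field_simp
    linarith [heq]
  have hH2 : H ^ 2 = (1 - x) ^ 2 / (M ^ 2 * (3 - 2 * x) ^ 3) := by
    have h : H ^ 2 = (α ^ 2 / M ^ 2) * ((1 - x) / (3 - 2 * x)) ^ 2 := by
      rw [hH]; ring
    rw [hα2] at h
    rw [h]; field_simp
  have hr0 : Real.sqrt (A / (4 * π)) = M * (3 - 2 * x) / (1 - x) := by
    have hAval : A / (4 * π) = (M * (3 - 2 * x) / (1 - x)) ^ 2 := by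
      rw [hH2] at hA
      have hπ' : π ≠ 0 := ne_of_gt hπ
      field_simp at hA ⊢
      nlinarith [hA, sq_nonneg M, sq_nonneg (1 - x)]
    rw [hAval]
    exact Real.sqrt_sq (by positivity)
  refine ⟨hα2, ?_, ?_⟩ <;> rw [hr0]
  · rw [hα2]
    field_simp
    ring
  · have hn : M * (3 - 2 * x) / (1 - x) - 3 * M = M * x / (1 - x) := by
      field_simp; ring
    have hd : M * (3 - 2 * x) / (1 - x) - 2 * M = M / (1 - x) := by
      field_simp; ring
    rw [hn, hd]
    rw [div_div_div_eq]
    field_simp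
end
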